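/- arXiv:2510.14375 — 3 statements merged into one kernel-verified Lean document; each statement's English description precedes it below -/
import Mathlib

section
/- Consider the forward-backward Euler penalized scheme f^{n+1} = fⁿ + (Δt/ε)[L(fⁿ) + β fⁿ^⊥] - (βΔt/ε) f^{n+1,⊥} in a Hilbert space H, where L is a bounded self-adjoint operator with finite-dimensional kernel N, π is the orthogonal projection onto N, h^⊥ = h - πh, L vanishes on N and satisfies ⟨L h, h⟩ ≤ -λ‖h^⊥‖² for some λ > 0, and ‖L h‖ ≤ C‖h^⊥‖. Then for any T > 0 and N steps with Δt = T/N, there exists β > 0 (independent of N) such that ‖f^N‖ ≤ ‖f⁰‖. -/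
/-- Stability of the forward-backward Euler penalized scheme
`f^{n+1} + (βΔt/ε)(f^{n+1})^⊥ = fⁿ + (Δt/ε)(L fⁿ + β fⁿ^⊥)` for the linearized
collision operator `L` (self-adjoint, vanishing on its finite-dimensional kernel,
micro-coercive, with `‖Lh‖ ≤ C‖h^⊥‖`): there is a penalization parameter `β > 0`,
independent of the number of steps `N` (with `Δt = T/N`), such that `‖f^N‖ ≤ ‖f⁰‖`. -/
theorem fb_euler_penalized_stability {H : Type*}
    [NormedAddCommGroup H] [InnerProductSpace ℝ H] [CompleteSpace H]
    (L proj : H →L[ℝ] H)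
    (hLsa : ∀ x y : H, (inner ℝ (L x) y : ℝ) = inner ℝ x (L y))
    (hidem : ∀ x, proj (proj x) = proj x)
    (horth : ∀ x y : H, (inner ℝ (x - proj x) (proj y) : ℝ) = 0)
    (hfd : FiniteDimensional ℝ (LinearMap.ker (L : H →ₗ[ℝ] H)))
    (hrange : ∀ x, proj x ∈ LinearMap.ker (L : H →ₗ[ℝ] H))
    (hfix : ∀ x ∈ LinearMap.ker (L : H →ₗ[ℝ] H), proj x = x)
    (hprojL : ∀ x, proj (L x) = 0)
    (lam C : ℝ) (hlam : 0 < lam) (hC : 0 ≤ C)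
    (hcoer : ∀ x : H, (inner ℝ (L x) x : ℝ) ≤ -lam * ‖x - proj x‖ ^ 2)
    (hbnd : ∀ x : H, ‖L x‖ ≤ C * ‖x - proj x‖)
    (T ε : ℝ) (hT : 0 < T) (hε : 0 < ε) :
    ∃ β > (0 : ℝ), ∀ N : ℕ, 0 < N → ∀ f : ℕ → H,
      (∀ n : ℕ, f (n + 1) + ((β * (T / N)) / ε) • (f (n + 1) - proj (f (n + 1)))
          = f n + ((T / N) / ε) • (L (f n) + β • (f n - proj (f n)))) →
      ‖f N‖ ≤ ‖f 0‖ := by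
  set β : ℝ := C ^ 2 / (2 * lam) + 1 with hβdef
  have hβpos : 0 < β := by positivity
  refine ⟨β, hβpos, ?_⟩
  intro N hN f hrec
  have hNpos : (0 : ℝ) < N := by exact_mod_cast hN
  set μ : ℝ := (T / N) / ε with hμdef
  have hμpos : 0 < μ := by positivity
  have hden : 0 < 1 + β * μ := by positivity
  set ν : ℝ := μ / (1 + β * μ) with hνdef
  have hνpos : 0 < ν := by positivity
  have hkey : ν * C ^ 2 ≤ 2 * lam := by
    have hβC : C ^ 2 ≤ 2 * lam * β := by
      rw [hβdef]
      have : 2 * lam * (C ^ 2 / (2 * lam)) = C ^ 2 := by field_simp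
      nlinarith
    have hνβ : ν * β ≤ 1 := by
      rw [hνdef, div_mul_eq_mul_div, div_le_one hden]; nlinarith
    nlinarith [hνpos.le]
  set w : ℕ → H := fun n => f n - proj (f n) with hw
  have hprojw : ∀ n, proj (w n) = 0 := by
    intro n; simp [hw, map_sub, hidem]
  have hstep : ∀ n, proj (f (n + 1)) = proj (f n) ∧ w (n + 1) = w n + ν • L (w n) := by
    intro n
    have h1 := hrec n
    rw [show (β * (T / ↑N)) / ε = β * μ by rw [hμdef]; ring] at h1
    have h2 : proj (f (n + 1)) = proj (f n) := by
      have h := congrArg proj h1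
      simpa [map_add, map_smul, map_sub, hidem, hprojL] using h
    refine ⟨h2, ?_⟩
    have hLw : L (f n) = L (w n) := by
      have h0 : L (proj (f n)) = 0 := hrange (f n)
      simp [hw, map_sub, h0]
    have h3 : (1 + β * μ) • w (n + 1) = (1 + β * μ) • w n + μ • L (w n) := by
      have e : w (n + 1) + (β * μ) • w (n + 1)
          = (f (n + 1) + (β * μ) • (f (n + 1) - proj (f (n + 1)))) - proj (f n) := by
        simp only [hw, h2]; abel
      rw [h1, hLw] at e
      rw [add_smul, one_smul, e]
      simp only [hw, smul_add, smul_smul]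
      module
    have h4 := congrArg (fun x => (1 + β * μ)⁻¹ • x) h3
    simp only [smul_add, smul_smul, inv_mul_cancel₀ hden.ne', one_smul] at h4
    rw [h4, hνdef]
    rw [div_eq_inv_mul]
  have hdec : ∀ n, ‖w (n + 1)‖ ^ 2 ≤ ‖w n‖ ^ 2 := by
    intro n
    rw [(hstep n).2]
    have hexp : ‖w n + ν • L (w n)‖ ^ 2
        = ‖w n‖ ^ 2 + 2 * (ν * inner ℝ (L (w n)) (w n)) + ν ^ 2 * ‖L (w n)‖ ^ 2 := by
      rw [norm_add_sq_real, real_inner_smul_right, norm_smul, mul_pow, real_inner_comm]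
      simp [abs_of_pos hνpos]
    rw [hexp]
    have hc := hcoer (w n); rw [hprojw n, sub_zero] at hc
    have hb := hbnd (w n); rw [hprojw n, sub_zero] at hb
    have hB2 : ‖L (w n)‖ ^ 2 ≤ C ^ 2 * ‖w n‖ ^ 2 := by
      nlinarith [norm_nonneg (L (w n)), norm_nonneg (w n)]
    nlinarith [mul_le_mul_of_nonneg_left hB2 (sq_nonneg ν),
      mul_le_mul_of_nonneg_left hc (by positivity : (0:ℝ) ≤ 2 * ν),
      mul_le_mul_of_nonneg_left hkey (by positivity : (0:ℝ) ≤ ν * ‖w n‖ ^ 2)]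
  have hwle : ∀ n, ‖w n‖ ^ 2 ≤ ‖w 0‖ ^ 2 := by
    intro n
    induction n with
    | zero => exact le_rfl
    | succ k ih => exact le_trans (hdec k) ih
  have hpe : ∀ n, proj (f n) = proj (f 0) := by
    intro n
    induction n with
    | zero => rfl
    | succ k ih => rw [(hstep k).1, ih]
  have hpyth : ∀ n, ‖f n‖ ^ 2 = ‖proj (f n)‖ ^ 2 + ‖w n‖ ^ 2 := by
    intro n
    have hfn : f n = proj (f n) + w n := by simp [hw]
    have horth' : (inner ℝ (proj (f n)) (w n) : ℝ) = 0 := by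
      rw [real_inner_comm]; exact horth (f n) (f n)
    calc ‖f n‖ ^ 2 = ‖proj (f n) + w n‖ ^ 2 := by rw [← hfn]
      _ = ‖proj (f n)‖ ^ 2 + ‖w n‖ ^ 2 := by
          rw [norm_add_sq_real, horth']; ring
  have hfinal : ‖f N‖ ^ 2 ≤ ‖f 0‖ ^ 2 := by
    rw [hpyth N, hpyth 0, hpe N]
    linarith [hwle N]
  nlinarith [norm_nonneg (f N), norm_nonneg (f 0), hfinal]
end

section
/- Suppose for each stage i of an s-stage scheme, ε f⁽ⁱ⁾ - ε Sᵢ[fⁿ] = Δt Σ_{j<i} a_{ij} S_{ij}[G(f⁽ʲ⁾)] + Δt Σ_{j≤i} ã_{ij} S̃_{ij}[Q_P(f⁽ʲ⁾)], where S-operators are linear isometries fixing 0, ã_{ii} ≠ 0 for all i, G and Q_P are continuous maps vanishing on a set E (local equilibria), and Q_P(f) = 0 implies f ∈ E. If each f⁽ⁱ⁾ converges as ε → 0 and fⁿ is fixed, then in the limit each stage value lies in E; in particular for a globally-stiffly-accurate scheme (f^{n+1} = f^{(s)}), lim_{ε→0} f^{n+1} ∈ E. -/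
open Filter

/-- Asymptotic-preserving property of a type-A GSA IMEX-RK semi-Lagrangian scheme,
abstractly: if each stage satisfies
`ε f⁽ⁱ⁾ - ε Sᵢ[fⁿ] = Δt Σ_{j<i} a_{ij} S_{ij}[G(f⁽ʲ⁾)] + Δt Σ_{j≤i} ã_{ij} S̃_{ij}[Q_P(f⁽ʲ⁾)]`
with the `S`-operators linear isometries, `ã_{ii} ≠ 0`, `G` and `Q_P` continuous and
vanishing on the equilibrium set `E`, and `Q_P(f) = 0 → f ∈ E`, then every limit of
a stage value as `ε → 0⁺` lies in `E`; in particular the GSA update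
`f^{n+1} = f^{(s)}` converges to an equilibrium. -/
theorem imex_rk_ap_property {V : Type*} [NormedAddCommGroup V] [NormedSpace ℝ V]
    (s : ℕ) (hs : 0 < s) (E : Set V)
    (G QP : V → V) (hGc : Continuous G) (hQPc : Continuous QP)
    (hGE : ∀ e ∈ E, G e = 0) (hQPE : ∀ e ∈ E, QP e = 0)
    (hker : ∀ f : V, QP f = 0 → f ∈ E)
    (a ta : Fin s → Fin s → ℝ) (hta : ∀ i, ta i i ≠ 0)
    (Sn : Fin s → (V →ₗᵢ[ℝ] V)) (S St : Fin s → Fin s → (V →ₗᵢ[ℝ] V))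
    (Δt : ℝ) (hΔt : 0 < Δt) (fn : V)
    (f : Fin s → ℝ → V) (L : Fin s → V)
    (hlim : ∀ i, Tendsto (f i) (nhdsWithin 0 (Set.Ioi 0)) (nhds (L i)))
    (hscheme : ∀ i : Fin s, ∀ ε : ℝ, 0 < ε →
      ε • f i ε - ε • Sn i fn
        = Δt • ((∑ j ∈ Finset.univ.filter (fun j => j < i), a i j • S i j (G (f j ε)))
          + ∑ j ∈ Finset.univ.filter (fun j => j ≤ i), ta i j • St i j (QP (f j ε)))) :
    (∀ i, L i ∈ E) ∧ L ⟨s - 1, Nat.sub_lt hs one_pos⟩ ∈ E := by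
  have key : ∀ i : Fin s, (∀ j, j < i → L j ∈ E) → L i ∈ E := by
    intro i hE
    -- limit of the RHS
    have hε0 : Tendsto (fun ε : ℝ => ε) (nhdsWithin 0 (Set.Ioi 0)) (nhds 0) :=
      tendsto_id.mono_left nhdsWithin_le_nhds
    have hLHS : Tendsto (fun ε : ℝ => ε • f i ε - ε • Sn i fn)
        (nhdsWithin 0 (Set.Ioi 0)) (nhds 0) := by
      have h1 : Tendsto (fun ε : ℝ => ε • f i ε) (nhdsWithin 0 (Set.Ioi 0))
          (nhds ((0 : ℝ) • L i)) := hε0.smul (hlim i)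
      have h2 : Tendsto (fun ε : ℝ => ε • Sn i fn) (nhdsWithin 0 (Set.Ioi 0))
          (nhds ((0 : ℝ) • Sn i fn)) := hε0.smul_const _
      simpa using h1.sub h2
    have hRHS : Tendsto (fun ε : ℝ =>
        Δt • ((∑ j ∈ Finset.univ.filter (fun j => j < i), a i j • S i j (G (f j ε)))
          + ∑ j ∈ Finset.univ.filter (fun j => j ≤ i), ta i j • St i j (QP (f j ε))))
        (nhdsWithin 0 (Set.Ioi 0))
        (nhds (Δt • ((∑ j ∈ Finset.univ.filter (fun j => j < i), a i j • S i j (G (L j)))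
          + ∑ j ∈ Finset.univ.filter (fun j => j ≤ i), ta i j • St i j (QP (L j))))) := by
      apply Tendsto.const_smul
      apply Tendsto.add
      · apply tendsto_finset_sum
        intro j _
        exact ((((S i j).continuous.comp hGc).tendsto (L j)).comp (hlim j)).const_smul _
      · apply tendsto_finset_sum
        intro j _
        exact ((((St i j).continuous.comp hQPc).tendsto (L j)).comp (hlim j)).const_smul _
    have heq : (0 : V)
        = Δt • ((∑ j ∈ Finset.univ.filter (fun j => j < i), a i j • S i j (G (L j)))
          + ∑ j ∈ Finset.univ.filter (fun j => j ≤ i), ta i j • St i j (QP (L j))) := by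
      refine tendsto_nhds_unique ?_ hRHS
      refine hLHS.congr' ?_
      filter_upwards [self_mem_nhdsWithin] with ε hε
      exact hscheme i ε hε
    have hsum : (∑ j ∈ Finset.univ.filter (fun j => j < i), a i j • S i j (G (L j)))
          + ∑ j ∈ Finset.univ.filter (fun j => j ≤ i), ta i j • St i j (QP (L j)) = 0 := by
      have := heq.symm
      exact (smul_eq_zero.mp this).resolve_left (ne_of_gt hΔt)
    have hA : (∑ j ∈ Finset.univ.filter (fun j => j < i), a i j • S i j (G (L j))) = 0 := by
      apply Finset.sum_eq_zero
      intro j hj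
      rw [Finset.mem_filter] at hj
      rw [hGE _ (hE j hj.2), map_zero, smul_zero]
    have hB : (∑ j ∈ Finset.univ.filter (fun j => j ≤ i), ta i j • St i j (QP (L j)))
        = ta i i • St i i (QP (L i)) := by
      apply Finset.sum_eq_single
      · intro j hj hne
        rw [Finset.mem_filter] at hj
        have : j < i := lt_of_le_of_ne hj.2 hne
        rw [hQPE _ (hE j this), map_zero, smul_zero]
      · intro h
        simp at h
    rw [hA, hB, zero_add] at hsum
    have hQ : QP (L i) = 0 := by
      have h1 : St i i (QP (L i)) = 0 :=
        (smul_eq_zero.mp hsum).resolve_left (hta i)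
      have := (St i i).injective (h1.trans (map_zero (St i i)).symm)
      exact this
    exact hker _ hQ
  have main : ∀ n : ℕ, ∀ i : Fin s, i.val = n → L i ∈ E := by
    intro n
    induction n using Nat.strong_induction_on with
    | _ n ih =>
      intro i hi
      apply key
      intro j hj
      exact ih j.val (hi ▸ hj) j rfl
  exact ⟨fun i => main i.val i rfl, main _ _ rfl⟩
end

section
/- Let A(α) and B(α) be the (k+1)×(k+1) SLDG transfer matrices A(α)_{p,q} = ω_p⁻¹(1-α) Σ_r ω_r ℓ̃_q(α + u_r(1-α)) ℓ̃_p(u_r(1-α)) and B(α)_{p,q} = ω_p⁻¹ α Σ_r ω_r ℓ̃_q(α u_r) ℓ̃_p(α(u_r - 1) + 1), where ℓ̃_q are Lagrange basis polynomials at the Gauss–Legendre nodes u_r on [0,1] with weights ω_r, exact for polynomials of degree ≤ 2k+1. Then mass is conserved across the two pieces: for every q, Σ_p ω_p (A(α)_{p,q} + B(α)_{p,q}) = ω_q. -/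
open intervalIntegral

-- partition of unity for Lagrange basis
lemma lagrange_sum_one (k : ℕ) (u : Fin (k + 1) → ℝ)
    (ℓ : Fin (k + 1) → Polynomial ℝ)
    (hdeg : ∀ q, (ℓ q).natDegree ≤ k)
    (hlag : ∀ q r, (ℓ q).eval (u r) = if q = r then 1 else 0)
    (x : ℝ) : (∑ p, (ℓ p).eval x) = 1 := by
  have hinj : Function.Injective u := by
    intro a b hab
    by_contra hne
    have h1 := hlag a a
    have h2 := hlag a b
    rw [hab] at h1
    simp [hne] at h1 h2
    rw [h1] at h2
    exact one_ne_zero h2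
  set S : Polynomial ℝ := (∑ p, ℓ p) - 1 with hS
  have hSdeg : S.natDegree ≤ k := by
    apply le_trans (Polynomial.natDegree_sub_le _ _)
    simp only [Polynomial.natDegree_one, max_le_iff]
    exact ⟨Polynomial.natDegree_sum_le_of_forall_le _ _ (fun q _ => hdeg q), Nat.zero_le k⟩
  have hroots : ∀ r, S.eval (u r) = 0 := by
    intro r
    simp only [hS, Polynomial.eval_sub, Polynomial.eval_finset_sum, Polynomial.eval_one]
    rw [Finset.sum_congr rfl (fun p _ => hlag p r)]
    simp
  have hS0 : S = 0 := by
    apply Polynomial.eq_zero_of_natDegree_lt_card_of_eval_eq_zero S hinj hroots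
    calc S.natDegree ≤ k := hSdeg
      _ < k + 1 := Nat.lt_succ_self k
      _ = Fintype.card (Fin (k+1)) := by simp
  have := congrArg (Polynomial.eval x) hS0
  simpa [hS, Polynomial.eval_finset_sum, sub_eq_zero] using this

set_option maxHeartbeats 1000000 in
/-- Mass conservation of the SLDG transfer matrices: with Gauss–Legendre nodes
`u_r` and weights `ω_r` on `[0,1]` (exact for polynomials of degree ≤ 2k+1) and
Lagrange basis polynomials `ℓ_q`, the matrices
`A(α)_{p,q} = ω_p⁻¹ (1-α) Σ_r ω_r ℓ_q(α + u_r(1-α)) ℓ_p(u_r(1-α))` and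
`B(α)_{p,q} = ω_p⁻¹ α Σ_r ω_r ℓ_q(α u_r) ℓ_p(α(u_r-1)+1)` satisfy
`Σ_p ω_p (A_{p,q} + B_{p,q}) = ω_q` for every `q`. -/
theorem sldg_transfer_mass_conservation (k : ℕ)
    (u ω : Fin (k + 1) → ℝ) (hω : ∀ r, 0 < ω r)
    (ℓ : Fin (k + 1) → Polynomial ℝ)
    (hdeg : ∀ q, (ℓ q).natDegree ≤ k)
    (hlag : ∀ q r, (ℓ q).eval (u r) = if q = r then 1 else 0)
    (hquad : ∀ p : Polynomial ℝ, p.natDegree ≤ 2 * k + 1 →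
      (∑ r, ω r * p.eval (u r)) = ∫ x in (0 : ℝ)..1, p.eval x)
    (α : ℝ) (hα : α ∈ Set.Icc (0 : ℝ) 1) :
    ∀ q, (∑ p, ω p *
        ((ω p)⁻¹ * (1 - α) *
            (∑ r, ω r * (ℓ q).eval (α + u r * (1 - α)) * (ℓ p).eval (u r * (1 - α)))
          + (ω p)⁻¹ * α *
            (∑ r, ω r * (ℓ q).eval (α * u r) * (ℓ p).eval (α * (u r - 1) + 1))))
      = ω q := by
  intro q
  have hone := lagrange_sum_one k u ℓ hdeg hlag
  -- Step 1: simplify the sum over p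
  have step1 : (∑ p, ω p *
        ((ω p)⁻¹ * (1 - α) *
            (∑ r, ω r * (ℓ q).eval (α + u r * (1 - α)) * (ℓ p).eval (u r * (1 - α)))
          + (ω p)⁻¹ * α *
            (∑ r, ω r * (ℓ q).eval (α * u r) * (ℓ p).eval (α * (u r - 1) + 1))))
      = ∑ r, ω r * ((1 - α) * (ℓ q).eval (α + u r * (1 - α))
          + α * (ℓ q).eval (α * u r)) := by
    have hpne : ∀ p : Fin (k+1), ω p ≠ 0 := fun p => (hω p).ne'
    calc (∑ p, ω p *
        ((ω p)⁻¹ * (1 - α) *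
            (∑ r, ω r * (ℓ q).eval (α + u r * (1 - α)) * (ℓ p).eval (u r * (1 - α)))
          + (ω p)⁻¹ * α *
            (∑ r, ω r * (ℓ q).eval (α * u r) * (ℓ p).eval (α * (u r - 1) + 1))))
        = ∑ p, ∑ r, (ω r * ((1 - α) * (ℓ q).eval (α + u r * (1 - α)) * (ℓ p).eval (u r * (1 - α))
            + α * (ℓ q).eval (α * u r) * (ℓ p).eval (α * (u r - 1) + 1))) := by
          refine Finset.sum_congr rfl fun p _ => ?_
          rw [mul_add, ← mul_assoc, ← mul_assoc, ← mul_assoc, ← mul_assoc,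
            mul_inv_cancel₀ (hpne p), one_mul, one_mul, Finset.mul_sum, Finset.mul_sum,
            ← Finset.sum_add_distrib]
          refine Finset.sum_congr rfl fun r _ => ?_
          ring
      _ = ∑ r, ∑ p, (ω r * ((1 - α) * (ℓ q).eval (α + u r * (1 - α)) * (ℓ p).eval (u r * (1 - α))
            + α * (ℓ q).eval (α * u r) * (ℓ p).eval (α * (u r - 1) + 1))) := Finset.sum_comm
      _ = ∑ r, ω r * ((1 - α) * (ℓ q).eval (α + u r * (1 - α))
          + α * (ℓ q).eval (α * u r)) := by
          refine Finset.sum_congr rfl fun r _ => ?_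
          rw [← Finset.mul_sum, Finset.sum_add_distrib]
          simp only [← Finset.mul_sum, hone, mul_one]
  rw [step1]
  -- Step 2: the polynomial P
  set P : Polynomial ℝ :=
    Polynomial.C (1 - α) * (ℓ q).comp (Polynomial.C (1 - α) * Polynomial.X + Polynomial.C α)
      + Polynomial.C α * (ℓ q).comp (Polynomial.C α * Polynomial.X) with hP
  have hPdeg : P.natDegree ≤ 2 * k + 1 := by
    apply le_trans (Polynomial.natDegree_add_le _ _)
    have h1 : ((ℓ q).comp (Polynomial.C (1 - α) * Polynomial.X + Polynomial.C α)).natDegree ≤ k := by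
      apply le_trans (Polynomial.natDegree_comp_le)
      calc (ℓ q).natDegree * (Polynomial.C (1 - α) * Polynomial.X + Polynomial.C α).natDegree
          ≤ k * 1 := Nat.mul_le_mul (hdeg q) (Polynomial.natDegree_linear_le)
        _ = k := mul_one k
    have h2 : ((ℓ q).comp (Polynomial.C α * Polynomial.X)).natDegree ≤ k := by
      apply le_trans (Polynomial.natDegree_comp_le)
      calc (ℓ q).natDegree * (Polynomial.C α * Polynomial.X).natDegree
          ≤ k * 1 := Nat.mul_le_mul (hdeg q) (by
            apply le_trans (Polynomial.natDegree_mul_le)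
            simp)
        _ = k := mul_one k
    simp only [max_le_iff]
    constructor
    · exact le_trans (Polynomial.natDegree_C_mul_le _ _) (by omega)
    · exact le_trans (Polynomial.natDegree_C_mul_le _ _) (by omega)
  have hPeval : ∀ x : ℝ, P.eval x
      = (1 - α) * (ℓ q).eval (α + x * (1 - α)) + α * (ℓ q).eval (α * x) := by
    intro x
    simp only [hP, Polynomial.eval_add, Polynomial.eval_mul, Polynomial.eval_C,
      Polynomial.eval_comp, Polynomial.eval_X]
    ring_nf
  -- Step 3: quadrature
  have hq1 : (∑ r, ω r * ((1 - α) * (ℓ q).eval (α + u r * (1 - α))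
        + α * (ℓ q).eval (α * u r))) = ∫ x in (0:ℝ)..1, P.eval x := by
    rw [← hquad P hPdeg]
    exact Finset.sum_congr rfl fun r _ => by rw [hPeval]
  rw [hq1]
  -- Step 4: change of variables
  have haux : ∀ c d : ℝ, (∫ x in (0:ℝ)..1, c * (ℓ q).eval (c * x + d))
      = ∫ x in d..(c + d), (ℓ q).eval x := by
    intro c d
    rcases eq_or_ne c 0 with hc | hc
    · simp [hc]
    · rw [intervalIntegral.integral_const_mul, intervalIntegral.integral_comp_mul_add
        (fun x => (ℓ q).eval x) hc d]
      simp [smul_eq_mul, ← mul_assoc, mul_inv_cancel₀ hc]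
  have hint : (∫ x in (0:ℝ)..1, P.eval x) = ∫ x in (0:ℝ)..1, (ℓ q).eval x := by
    have e1 : (∫ x in (0:ℝ)..1, P.eval x)
        = (∫ x in (0:ℝ)..1, (1 - α) * (ℓ q).eval ((1 - α) * x + α))
          + ∫ x in (0:ℝ)..1, α * (ℓ q).eval (α * x + 0) := by
      rw [← intervalIntegral.integral_add]
      · refine intervalIntegral.integral_congr fun x _ => ?_
        rw [hPeval]; ring_nf
      · exact Continuous.intervalIntegrable
          (continuous_const.mul ((ℓ q).continuous.comp
            ((continuous_const.mul continuous_id).add continuous_const))) _ _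
      · exact Continuous.intervalIntegrable
          (continuous_const.mul ((ℓ q).continuous.comp
            ((continuous_const.mul continuous_id).add continuous_const))) _ _
    rw [e1, haux, haux]
    have h1 : (1 - α) + α = 1 := by ring
    have h2 : α + 0 = α := by ring
    rw [h1, h2]
    rw [add_comm]
    exact intervalIntegral.integral_add_adjacent_intervals
      ((Polynomial.continuous _).intervalIntegrable _ _)
      ((Polynomial.continuous _).intervalIntegrable _ _)
  rw [hint, ← hquad (ℓ q) (le_trans (hdeg q) (by omega))]
  rw [Finset.sum_congr rfl (fun r _ => by rw [hlag q r])]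
  simp
end
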